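/- arXiv:1506.02409 — 3 statements merged into one kernel-verified Lean document; each statement's English description precedes it below -/
import Mathlib

section
/- Let {a_k}, {b_k}, {c_k}, {η_k} be sequences of nonnegative real numbers such that a_{k+1} ≤ (1 + η_k) a_k − b_k + c_k for each k, with ∑ c_k < ∞ and ∑ η_k < ∞. Then the sequence {a_k} converges and ∑ b_k < ∞. -/
open Filter Finset

theorem quasi_fejer_lemma (a b c η : ℕ → ℝ)
    (ha : ∀ k, 0 ≤ a k) (hb : ∀ k, 0 ≤ b k) (hc : ∀ k, 0 ≤ c k) (hη : ∀ k, 0 ≤ η k)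
    (hrec : ∀ k, a (k + 1) ≤ (1 + η k) * a k - b k + c k)
    (hcsum : Summable c) (hηsum : Summable η) :
    (∃ L : ℝ, Filter.Tendsto a Filter.atTop (nhds L)) ∧ Summable b := by
  -- the product P
  set P : ℕ → ℝ := fun n => ∏ i ∈ range n, (1 + η i) with hP
  have hPpos : ∀ n, 0 < P n := by
    intro n
    exact Finset.prod_pos (fun i _ => by nlinarith [hη i])
  have hP1 : ∀ n, 1 ≤ P n := by
    intro n
    induction n with
    | zero => simp [hP]
    | succ m ih => simp only [hP, Finset.prod_range_succ] at ih ⊢; nlinarith [hη m]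
  have hPsucc : ∀ n, P (n + 1) = P n * (1 + η n) := by
    intro n; simp [hP, Finset.prod_range_succ]
  -- logs are summable
  have hlogsum : Summable (fun k => Real.log (1 + η k)) := by
    apply Summable.of_nonneg_of_le (fun k => Real.log_nonneg (by linarith [hη k]))
      (fun k => by
        have := Real.log_le_sub_one_of_pos (by linarith [hη k] : (0:ℝ) < 1 + η k)
        linarith) hηsum
  have hPexp : ∀ n, P n = Real.exp (∑ i ∈ range n, Real.log (1 + η i)) := by
    intro n
    rw [Real.exp_sum]
    apply Finset.prod_congr rfl
    intro i _
    rw [Real.exp_log (by linarith [hη i])]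
  have hPtend : Tendsto P atTop (nhds (Real.exp (∑' k, Real.log (1 + η k)))) := by
    have h1 := hlogsum.hasSum.tendsto_sum_nat
    have h2 := (Real.continuous_exp.tendsto _).comp h1
    apply h2.congr
    intro n
    exact (hPexp n).symm
  -- scaled sequence v
  set v : ℕ → ℝ := fun n => a n / P n with hv
  have hvstep : ∀ n, v (n + 1) ≤ v n + c n := by
    intro n
    have hPn := hPpos n
    have h2 : a (n + 1) ≤ (1 + η n) * a n + c n := by nlinarith [hrec n, hb n]
    have hden : (0:ℝ) < P n * (1 + η n) := by nlinarith [hη n]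
    have hcancel : a n / P n * P n = a n := div_mul_cancel₀ _ (ne_of_gt hPn)
    have hge1 : (0:ℝ) ≤ P n * (1 + η n) - 1 := by nlinarith [hP1 n, hη n]
    simp only [hv, hPsucc n]
    rw [div_le_iff₀ hden]
    nlinarith [mul_nonneg (hc n) hge1, h2, hcancel]
  have hvnonneg : ∀ n, 0 ≤ v n := fun n => div_nonneg (ha n) (hPpos n).le
  -- partial sums of c
  set Sc : ℕ → ℝ := fun n => ∑ i ∈ range n, c i with hSc
  have hSctend : Tendsto Sc atTop (nhds (∑' k, c k)) := hcsum.hasSum.tendsto_sum_nat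
  have hScle : ∀ n, Sc n ≤ ∑' k, c k := fun n => Summable.sum_le_tsum (range n) (fun i _ => hc i) hcsum
  -- w = v - Sc is antitone and bounded below
  set w : ℕ → ℝ := fun n => v n - Sc n with hw
  have hwanti : Antitone w := by
    apply antitone_nat_of_succ_le
    intro n
    have := hvstep n
    simp only [hw, hSc, Finset.sum_range_succ]
    linarith
  have hwbdd : BddBelow (Set.range w) := by
    refine ⟨-(∑' k, c k), ?_⟩
    rintro x ⟨n, rfl⟩
    have := hvnonneg n
    have := hScle n
    simp only [hw]
    linarith
  have hwtend : Tendsto w atTop (nhds (⨅ n, w n)) := tendsto_atTop_ciInf hwanti hwbdd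
  have hvtend : Tendsto v atTop (nhds ((⨅ n, w n) + ∑' k, c k)) := by
    have := hwtend.add hSctend
    apply this.congr
    intro n
    simp [hw]
  -- a = v * P converges
  have hatend : Tendsto a atTop
      (nhds (((⨅ n, w n) + ∑' k, c k) * Real.exp (∑' k, Real.log (1 + η k)))) := by
    have := hvtend.mul hPtend
    apply this.congr
    intro n
    simp only [hv]
    exact div_mul_cancel₀ _ (hPpos n).ne'
  refine ⟨⟨_, hatend⟩, ?_⟩
  -- boundedness of a
  obtain ⟨M, hM⟩ := hatend.bddAbove_range
  have hM' : ∀ k, a k ≤ M := fun k => hM ⟨k, rfl⟩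
  have hM0 : 0 ≤ M := le_trans (ha 0) (hM' 0)
  -- summability of b via bounded partial sums
  apply summable_of_sum_range_le hb (c := a 0 + (∑' k, η k) * M + ∑' k, c k)
  intro n
  have hterm : ∀ k, b k ≤ (a k - a (k + 1)) + η k * M + c k := by
    intro k
    have h1 := hrec k
    have h2 : η k * a k ≤ η k * M := mul_le_mul_of_nonneg_left (hM' k) (hη k)
    nlinarith
  calc ∑ k ∈ range n, b k ≤ ∑ k ∈ range n, ((a k - a (k + 1)) + η k * M + c k) :=
        Finset.sum_le_sum (fun k _ => hterm k)
    _ = (a 0 - a n) + (∑ k ∈ range n, η k) * M + ∑ k ∈ range n, c k := by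
        rw [Finset.sum_add_distrib, Finset.sum_add_distrib, Finset.sum_range_sub',
          Finset.sum_mul]
    _ ≤ a 0 + (∑' k, η k) * M + ∑' k, c k := by
        have h1 : ∑ k ∈ range n, η k ≤ ∑' k, η k :=
          Summable.sum_le_tsum (range n) (fun i _ => hη i) hηsum
        have h2 := hScle n
        have h3 := ha n
        have h4 := mul_le_mul_of_nonneg_right h1 hM0
        simp only [hSc] at h2
        linarith
end

section
/- Let h : H → (−∞, +∞] be a convex lower semicontinuous function on a Hadamard space (H, d) and λ > 0. Then for every x, y ∈ H, h(prox_{λh}(x)) − h(y) ≤ (1/(2λ)) d(x,y)² − (1/(2λ)) d(prox_{λh}(x), y)², where prox_{λh}(x) is the minimizer of y ↦ (1/(2λ)) d(x,y)² + h(y). -/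
/-- In a Hadamard space `(H, d)` (complete geodesic metric space satisfying the four-point
inequality), for a proper convex lower semicontinuous `h : H → (−∞,+∞]` and `λ > 0`, the
proximal point `p = prox_{λh}(x)` (the minimizer of `z ↦ (1/(2λ)) d(x,z)² + h(z)`) satisfies
`h(p) − h(y) ≤ (1/(2λ)) d(x,y)² − (1/(2λ)) d(p,y)²` for all `y`. Geodesics are encoded by a
map `γ`, and convexity of `h` is convexity along these geodesics. -/
theorem hadamard_prox_inequality {H : Type*} [MetricSpace H] [CompleteSpace H]
    (hadamard : ∀ x y v w : H,
      dist x v ^ 2 + dist y w ^ 2 ≤ dist x w ^ 2 + dist y v ^ 2 + 2 * dist x y * dist v w)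
    (γ : H → H → ℝ → H)
    (hγ0 : ∀ x y, γ x y 0 = x) (hγ1 : ∀ x y, γ x y 1 = y)
    (hγd : ∀ x y : H, ∀ s ∈ Set.Icc (0 : ℝ) 1, ∀ t ∈ Set.Icc (0 : ℝ) 1,
      dist (γ x y s) (γ x y t) = |s - t| * dist x y)
    (h : H → EReal) (hbot : ∀ x, h x ≠ ⊥) (hproper : ∃ x, h x ≠ ⊤)
    (hlsc : LowerSemicontinuous h)
    (hconv : ∀ x y : H, ∀ t ∈ Set.Icc (0 : ℝ) 1,
      h (γ x y t) ≤ ((1 - t : ℝ) : EReal) * h x + (t : EReal) * h y)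
    (lam : ℝ) (hlam : 0 < lam) (x p : H)
    (hprox : ∀ z : H,
      h p + ((1 / (2 * lam) * dist x p ^ 2 : ℝ) : EReal) ≤
        h z + ((1 / (2 * lam) * dist x z ^ 2 : ℝ) : EReal)) :
    ∀ y : H, h p - h y ≤
      ((1 / (2 * lam) * dist x y ^ 2 - 1 / (2 * lam) * dist p y ^ 2 : ℝ) : EReal) := by
  intro y
  set c : ℝ := 1 / (2 * lam) with hc_def
  have hc : 0 < c := by positivity
  -- h p is not ⊤
  obtain ⟨z0, hz0⟩ := hproper
  have hpne : h p ≠ ⊤ := by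
    intro hT
    have h1 := hprox z0
    rw [hT, EReal.top_add_coe] at h1
    exact absurd (top_le_iff.mp h1) (EReal.add_lt_top hz0 (EReal.coe_ne_top _)).ne
  -- so h p = P for a real P
  set P : ℝ := (h p).toReal with hP_def
  have hP : h p = (P : EReal) := (EReal.coe_toReal hpne (hbot p)).symm
  by_cases hyT : h y = ⊤
  · rw [hP, hyT]
    simp
  set Y : ℝ := (h y).toReal with hY_def
  have hY : h y = (Y : EReal) := (EReal.coe_toReal hyT (hbot y)).symm
  set A : ℝ := dist x y with hA_def
  set D : ℝ := dist p y with hD_def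
  have hD0 : 0 ≤ D := dist_nonneg
  have hA0 : 0 ≤ A := dist_nonneg
  -- key estimate for every t ∈ (0, 1]
  have key : ∀ t : ℝ, 0 < t → t ≤ 1 → P - Y ≤ 2*c*A*D - 2*c*D^2 + t*(c*D^2) := by
    intro t ht0 ht1
    have htI : t ∈ Set.Icc (0:ℝ) 1 := ⟨le_of_lt ht0, ht1⟩
    set m : H := γ p y t with hm_def
    -- distances along the geodesic
    have hdmp : dist m p = t * D := by
      have := hγd p y t htI 0 ⟨le_refl 0, zero_le_one⟩
      rw [hγ0] at this
      rw [hm_def, this, abs_of_nonneg (by linarith : (0:ℝ) ≤ t - 0)]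
      ring
    have hdmy : dist m y = (1 - t) * D := by
      have := hγd p y t htI 1 ⟨zero_le_one, le_refl 1⟩
      rw [hγ1] at this
      rw [hm_def, this, abs_of_nonpos (by linarith : t - 1 ≤ 0)]
      ring
    -- quadrilateral inequality gives an upper bound on dist x m
    have quad := hadamard x y m p
    rw [dist_comm y m, dist_comm y p, hdmy, hdmp] at quad
    have hdxm : dist x m ^ 2 ≤ dist x p ^ 2 + ((1-t)*D)^2 - D^2 + 2*t*A*D := by
      nlinarith [quad]
    -- h m is real
    have hconvm := hconv p y t htI
    rw [hP, hY] at hconvm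
    have hconvm' : h m ≤ (((1-t)*P + t*Y : ℝ) : EReal) := by
      calc h m ≤ ((1 - t : ℝ) : EReal) * (P:EReal) + (t : EReal) * (Y:EReal) := hconvm
        _ = (((1-t)*P + t*Y : ℝ) : EReal) := by
            rw [← EReal.coe_mul, ← EReal.coe_mul, ← EReal.coe_add]
    have hmT : h m ≠ ⊤ := by
      intro hT
      rw [hT, top_le_iff] at hconvm'
      exact (EReal.coe_ne_top _) hconvm'
    set M : ℝ := (h m).toReal with hM_def
    have hM : h m = (M : EReal) := (EReal.coe_toReal hmT (hbot m)).symm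
    have hMle : M ≤ (1-t)*P + t*Y := by
      rw [hM] at hconvm'
      exact_mod_cast hconvm'
    -- prox inequality at m, as reals
    have hproxm := hprox m
    rw [hP, hM, ← EReal.coe_add, ← EReal.coe_add, EReal.coe_le_coe_iff] at hproxm
    -- combine
    have hineq : t * (P - Y) ≤ t * (2*c*A*D - 2*c*D^2 + t*(c*D^2)) := by
      nlinarith [hproxm, hMle, hdxm, hc.le]
    exact le_of_mul_le_mul_left (by linarith [hineq]) ht0
  -- let t → 0
  have hlim : P - Y ≤ 2*c*A*D - 2*c*D^2 := by
    apply le_of_forall_pos_le_add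
    intro ε hε
    rcases le_or_gt (c*D^2) 0 with hcd | hcd
    · have := key 1 one_pos le_rfl
      nlinarith
    · set t : ℝ := min 1 (ε / (c*D^2)) with ht_def
      have ht0 : 0 < t := lt_min one_pos (div_pos hε hcd)
      have ht1 : t ≤ 1 := min_le_left _ _
      have h2 : t * (c*D^2) ≤ ε := by
        have : t ≤ ε / (c*D^2) := min_le_right _ _
        calc t * (c*D^2) ≤ (ε / (c*D^2)) * (c*D^2) := by nlinarith
          _ = ε := div_mul_cancel₀ _ (ne_of_gt hcd)
      have := key t ht0 ht1
      linarith
  -- conclude: 2cD(A - D) ≤ c(A² - D²)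
  have hfinal : P - Y ≤ c * A^2 - c * D^2 := by nlinarith [sq_nonneg (A - D)]
  rw [hP, hY, ← EReal.coe_sub, EReal.coe_le_coe_iff]
  calc P - Y ≤ c * A^2 - c * D^2 := hfinal
    _ = c * A^2 - c * D^2 := rfl
end

section
/- The geometric mean of symmetric positive definite matrices is symmetric in its arguments: for all x, z ∈ P(r), x^{1/2}(x^{−1/2} z x^{−1/2})^{1/2} x^{1/2} = z^{1/2}(z^{−1/2} x z^{−1/2})^{1/2} z^{1/2}. -/
/-- The geometric mean of symmetric positive definite matrices is symmetric in its
arguments: `x^{1/2}(x^{-1/2} z x^{-1/2})^{1/2} x^{1/2} = z^{1/2}(z^{-1/2} x z^{-1/2})^{1/2} z^{1/2}`.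
Square roots are encoded via their characterization as the unique SPD roots. -/
theorem geometric_mean_symm {r : ℕ} (x z : Matrix (Fin r) (Fin r) ℝ)
    (hx : x.PosDef) (hz : z.PosDef)
    (sx : Matrix (Fin r) (Fin r) ℝ) (hsx : sx.PosDef) (hsx2 : sx * sx = x)
    (sz : Matrix (Fin r) (Fin r) ℝ) (hsz : sz.PosDef) (hsz2 : sz * sz = z)
    (a : Matrix (Fin r) (Fin r) ℝ) (ha : a.PosDef) (ha2 : a * a = sx⁻¹ * z * sx⁻¹)
    (b : Matrix (Fin r) (Fin r) ℝ) (hb : b.PosDef) (hb2 : b * b = sz⁻¹ * x * sz⁻¹) :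
    sx * a * sx = sz * b * sz := by
  have dx : IsUnit sx.det := isUnit_iff_ne_zero.mpr hsx.det_pos.ne'
  have dz : IsUnit sz.det := isUnit_iff_ne_zero.mpr hsz.det_pos.ne'
  have db : IsUnit b.det := isUnit_iff_ne_zero.mpr hb.det_pos.ne'
  have hx1 : sx⁻¹ * sx = 1 := Matrix.nonsing_inv_mul _ dx
  have hx2 : sx * sx⁻¹ = 1 := Matrix.mul_nonsing_inv _ dx
  have hz1 : sz⁻¹ * sz = 1 := Matrix.nonsing_inv_mul _ dz
  have hz2 : sz * sz⁻¹ = 1 := Matrix.mul_nonsing_inv _ dz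
  have hb1 : b⁻¹ * b = 1 := Matrix.nonsing_inv_mul _ db
  have hbb : b * b⁻¹ = 1 := Matrix.mul_nonsing_inv _ db
  set m := sz * b * sz with hm
  -- x in terms of sz and b
  have hxz : x = sz * b * b * sz := by
    have : sz * (b * b) * sz = x := by
      rw [hb2]
      calc sz * (sz⁻¹ * x * sz⁻¹) * sz
          = (sz * sz⁻¹) * x * (sz⁻¹ * sz) := by noncomm_ring
        _ = x := by rw [hz2, hz1, Matrix.one_mul, Matrix.mul_one]
    rw [← this]; noncomm_ring
  have hxinv : x⁻¹ = sz⁻¹ * b⁻¹ * b⁻¹ * sz⁻¹ := by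
    rw [hxz]
    rw [Matrix.mul_inv_rev, Matrix.mul_inv_rev, Matrix.mul_inv_rev]
    noncomm_ring
  -- m satisfies the Riccati equation m x⁻¹ m = z
  have hric : m * x⁻¹ * m = z := by
    rw [hm, hxinv, ← hsz2]
    calc sz * b * sz * (sz⁻¹ * b⁻¹ * b⁻¹ * sz⁻¹) * (sz * b * sz)
        = sz * (b * ((sz * sz⁻¹) * b⁻¹) * (b⁻¹ * (sz⁻¹ * sz) * b)) * sz := by
          noncomm_ring
      _ = sz * sz := by
          rw [hz2, hz1, Matrix.mul_one, Matrix.one_mul, hbb, hb1, Matrix.one_mul,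
            Matrix.mul_one]
  -- sx⁻¹ * sx⁻¹ = x⁻¹
  have hxinv2 : sx⁻¹ * sx⁻¹ = x⁻¹ := by
    rw [← hsx2, Matrix.mul_inv_rev]
  -- a equals sx⁻¹ * m * sx⁻¹ by uniqueness of PSD square roots
  have hkey : a = sx⁻¹ * m * sx⁻¹ := by
    have hsxiH : sx⁻¹.conjTranspose = sx⁻¹ := hsx.inv.isHermitian
    have hmps : m.PosSemidef := by
      have := hb.posSemidef.mul_mul_conjTranspose_same sz
      rwa [hsz.isHermitian] at this
    have hps : (sx⁻¹ * m * sx⁻¹).PosSemidef := by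
      have := hmps.mul_mul_conjTranspose_same sx⁻¹
      rwa [hsxiH] at this
    open scoped MatrixOrder in
    refine (CFC.sq_eq_sq_iff (A := Matrix (Fin r) (Fin r) ℝ) a _ ha.posSemidef.nonneg hps.nonneg).mp ?_
    rw [pow_two, pow_two, ha2]
    calc sx⁻¹ * z * sx⁻¹
        = sx⁻¹ * (m * x⁻¹ * m) * sx⁻¹ := by rw [hric]
      _ = sx⁻¹ * (m * (sx⁻¹ * sx⁻¹) * m) * sx⁻¹ := by rw [hxinv2]
      _ = sx⁻¹ * m * sx⁻¹ * (sx⁻¹ * m * sx⁻¹) := by noncomm_ring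
  rw [hkey]
  calc sx * (sx⁻¹ * m * sx⁻¹) * sx
      = (sx * sx⁻¹) * m * (sx⁻¹ * sx) := by noncomm_ring
    _ = m := by rw [hx2, hx1, Matrix.one_mul, Matrix.mul_one]
end
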